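/- Let R be a zero-symmetric right near-ring, M a near-ring module over R, and let v ∈ {0,2,3,c}. If P is a v-prime R-ideal of M (with RM ⊄ P), then for every R-ideal N of M with N ⊄ P, the set (P : N) = {r ∈ R : rN ⊆ P} is a v-classical prime ideal of R. -/
import Mathlib


open Pointwise

/-- A zero-symmetric right near-ring: `(R,+)` is a (not necessarily abelian) group,
`(R,·)` is a semigroup, right distributivity holds, and `r * 0 = 0`. -/
class NearRing (R : Type*) extends AddGroup R, Semigroup R where
  right_distrib : ∀ a b c : R, (a + b) * c = a * c + b * c
  mul_zero : ∀ a : R, a * 0 = 0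

/-- A (left) near-ring module over a right near-ring `R`. -/
class NearRingModule (R : Type*) [NearRing R] (M : Type*) [AddGroup M] extends
    SMul R M where
  add_smul : ∀ (r s : R) (m : M), (r + s) • m = r • m + s • m
  mul_smul : ∀ (r s : R) (m : M), (r * s) • m = r • s • m

/-- A subgroup of a (not necessarily abelian) additive group, as a set. -/
def IsSubgrp {G : Type*} [AddGroup G] (H : Set G) : Prop :=
  (0 : G) ∈ H ∧ (∀ x ∈ H, ∀ y ∈ H, x + y ∈ H) ∧ ∀ x ∈ H, -x ∈ H

/-- A normal subgroup of an additive group, as a set. -/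
def IsNormalSubgrp {G : Type*} [AddGroup G] (H : Set G) : Prop :=
  IsSubgrp H ∧ ∀ g : G, ∀ h ∈ H, g + h + -g ∈ H

/-- An `R`-submodule of a near-ring module `M`: a subgroup `N` with `RN ⊆ N`. -/
def IsRSubmodule (R : Type*) [NearRing R] {M : Type*} [AddGroup M]
    [NearRingModule R M] (N : Set M) : Prop :=
  IsSubgrp N ∧ ∀ r : R, ∀ n ∈ N, r • n ∈ N

/-- An `R`-ideal of a near-ring module `M`: a normal subgroup `P` with
`r • (m + p) - r • m ∈ P`. -/
def IsRIdeal (R : Type*) [NearRing R] {M : Type*} [AddGroup M]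
    [NearRingModule R M] (P : Set M) : Prop :=
  IsNormalSubgrp P ∧ ∀ (r : R) (m : M), ∀ p ∈ P, r • (m + p) - r • m ∈ P

/-- A (two-sided) ideal of the near-ring `R`. -/
def IsIdeal {R : Type*} [NearRing R] (I : Set R) : Prop :=
  IsNormalSubgrp I ∧ (∀ i ∈ I, ∀ r : R, i * r ∈ I) ∧
    ∀ r₁ r₂ : R, ∀ i ∈ I, r₁ * (r₂ + i) - r₁ * r₂ ∈ I

/-- A left `R`-subgroup of `R`: a subgroup `A` of `(R,+)` with `RA ⊆ A`. -/
def IsLeftRSubgroup {R : Type*} [NearRing R] (A : Set R) : Prop :=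
  IsSubgrp A ∧ ∀ r : R, ∀ a ∈ A, r * a ∈ A

/-- `P` satisfies the 0-classical prime condition: `ABN ⊆ P` implies `AN ⊆ P` or
`BN ⊆ P` for all ideals `A, B` of `R` and all `R`-submodules `N` of `M`. -/
def Classical0Prime (R : Type*) [NearRing R] {M : Type*} [AddGroup M]
    [NearRingModule R M] (P : Set M) : Prop :=
  ∀ (A B : Set R) (N : Set M), IsIdeal A → IsIdeal B → IsRSubmodule R N →
    (A * B) • N ⊆ P → A • N ⊆ P ∨ B • N ⊆ P

/-- `P` satisfies the 2-classical prime condition (with left `R`-subgroups `A, B`). -/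
def Classical2Prime (R : Type*) [NearRing R] {M : Type*} [AddGroup M]
    [NearRingModule R M] (P : Set M) : Prop :=
  ∀ (A B : Set R) (N : Set M), IsLeftRSubgroup A → IsLeftRSubgroup B →
    IsRSubmodule R N → (A * B) • N ⊆ P → A • N ⊆ P ∨ B • N ⊆ P

/-- `P` satisfies the 3-classical prime condition: `(aR)(bR)N ⊆ P` implies
`aN ⊆ P` or `bN ⊆ P`. -/
def Classical3Prime (R : Type*) [NearRing R] {M : Type*} [AddGroup M]
    [NearRingModule R M] (P : Set M) : Prop :=
  ∀ (a b : R) (N : Set M), IsRSubmodule R N →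
    ((({a} : Set R) * Set.univ) * (({b} : Set R) * Set.univ)) • N ⊆ P →
    a • N ⊆ P ∨ b • N ⊆ P

/-- `P` satisfies the c-classical prime condition: `(aRb)N ⊆ P` implies
`aN ⊆ P` or `bN ⊆ P`. -/
def ClassicalCPrime (R : Type*) [NearRing R] {M : Type*} [AddGroup M]
    [NearRingModule R M] (P : Set M) : Prop :=
  ∀ (a b : R) (N : Set M), IsRSubmodule R N →
    (({a} : Set R) * Set.univ * ({b} : Set R)) • N ⊆ P →
    a • N ⊆ P ∨ b • N ⊆ P

/-- `P` satisfies the 0-prime (Dauns/Juglal) condition: `AB ⊆ P` implies `AM ⊆ P` or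
`B ⊆ P` for all ideals `A` of `R` and `R`-submodules `B` of `M`. -/
def Prime0 (R : Type*) [NearRing R] {M : Type*} [AddGroup M]
    [NearRingModule R M] (P : Set M) : Prop :=
  ∀ (A : Set R) (B : Set M), IsIdeal A → IsRSubmodule R B →
    A • B ⊆ P → A • (Set.univ : Set M) ⊆ P ∨ B ⊆ P

/-- `P` satisfies the 2-prime condition (with left `R`-subgroups `A`). -/
def Prime2 (R : Type*) [NearRing R] {M : Type*} [AddGroup M]
    [NearRingModule R M] (P : Set M) : Prop :=
  ∀ (A : Set R) (B : Set M), IsLeftRSubgroup A → IsRSubmodule R B →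
    A • B ⊆ P → A • (Set.univ : Set M) ⊆ P ∨ B ⊆ P

/-- `P` satisfies the 3-prime condition: `aRm ⊆ P` implies `aM ⊆ P` or `m ∈ P`. -/
def Prime3 (R : Type*) [NearRing R] {M : Type*} [AddGroup M]
    [NearRingModule R M] (P : Set M) : Prop :=
  ∀ (a : R) (m : M), (({a} : Set R) * Set.univ) • ({m} : Set M) ⊆ P →
    a • (Set.univ : Set M) ⊆ P ∨ m ∈ P

/-- `P` satisfies the c-prime (completely prime) condition: `rm ∈ P` implies
`rM ⊆ P` or `m ∈ P`. -/
def PrimeC (R : Type*) [NearRing R] {M : Type*} [AddGroup M]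
    [NearRingModule R M] (P : Set M) : Prop :=
  ∀ (r : R) (m : M), r • m ∈ P → r • (Set.univ : Set M) ⊆ P ∨ m ∈ P

/-- `Q` is a 0-classical prime ideal of `R`: a proper ideal such that `ABI ⊆ Q`
implies `AI ⊆ Q` or `BI ⊆ Q` for all ideals `A, B, I` of `R`. -/
def Classical0PrimeIdealR {R : Type*} [NearRing R] (Q : Set R) : Prop :=
  IsIdeal Q ∧ Q ≠ Set.univ ∧
    ∀ A B I : Set R, IsIdeal A → IsIdeal B → IsIdeal I →
      A * B * I ⊆ Q → A * I ⊆ Q ∨ B * I ⊆ Q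

/-- `Q` is a 2-classical prime ideal of `R` (with left `R`-subgroups `A, B`). -/
def Classical2PrimeIdealR {R : Type*} [NearRing R] (Q : Set R) : Prop :=
  IsIdeal Q ∧ Q ≠ Set.univ ∧
    ∀ A B I : Set R, IsLeftRSubgroup A → IsLeftRSubgroup B → IsIdeal I →
      A * B * I ⊆ Q → A * I ⊆ Q ∨ B * I ⊆ Q

/-- `Q` is a 3-classical prime ideal of `R`: `(aR)(bR)I ⊆ Q` implies `aI ⊆ Q` or
`bI ⊆ Q` for all `a, b ∈ R` and all ideals `I` of `R`. -/
def Classical3PrimeIdealR {R : Type*} [NearRing R] (Q : Set R) : Prop :=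
  IsIdeal Q ∧ Q ≠ Set.univ ∧
    ∀ (a b : R) (I : Set R), IsIdeal I →
      (({a} : Set R) * Set.univ) * (({b} : Set R) * Set.univ) * I ⊆ Q →
      ({a} : Set R) * I ⊆ Q ∨ ({b} : Set R) * I ⊆ Q

/-- `Q` is a c-classical prime ideal of `R`: `(aRb)I ⊆ Q` implies `aI ⊆ Q` or
`bI ⊆ Q` for all `a, b ∈ R` and all ideals `I` of `R`. -/
def ClassicalCPrimeIdealR {R : Type*} [NearRing R] (Q : Set R) : Prop :=
  IsIdeal Q ∧ Q ≠ Set.univ ∧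
    ∀ (a b : R) (I : Set R), IsIdeal I →
      ({a} : Set R) * Set.univ * ({b} : Set R) * I ⊆ Q →
      ({a} : Set R) * I ⊆ Q ∨ ({b} : Set R) * I ⊆ Q

/-- The colon (residual) set `(P : X) = {r ∈ R : rX ⊆ P}`. -/
def colonSet (R : Type*) [NearRing R] {M : Type*} [AddGroup M]
    [NearRingModule R M] (P X : Set M) : Set R :=
  {r : R | ∀ x ∈ X, r • x ∈ P}


section NearRingLemmas

variable {R : Type*} [NearRing R] {M : Type*} [AddGroup M] [NearRingModule R M]

lemma nr_add_smul (r s : R) (m : M) : (r + s) • m = r • m + s • m :=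
  NearRingModule.add_smul r s m

lemma nr_mul_smul (r s : R) (m : M) : (r * s) • m = r • s • m :=
  NearRingModule.mul_smul r s m

lemma nr_zero_smul (m : M) : (0 : R) • m = 0 := by
  have h := nr_add_smul (0 : R) 0 m
  rw [add_zero] at h
  exact (left_eq_add.mp h)

lemma nr_neg_smul (r : R) (m : M) : (-r) • m = -(r • m) := by
  have h := nr_add_smul r (-r) m
  rw [add_neg_cancel, nr_zero_smul] at h
  exact (neg_eq_of_add_eq_zero_right h.symm).symm

lemma nr_smul_zero (r : R) : r • (0 : M) = 0 := by
  have h : r • ((0 : R) • (0 : M)) = (r * 0) • (0 : M) := (nr_mul_smul r 0 0).symm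
  rw [nr_zero_smul, NearRing.mul_zero, nr_zero_smul] at h
  exact h

lemma rideal_smul_mem {P : Set M} (hP : IsRIdeal R P) {p : M} (hp : p ∈ P) (r : R) :
    r • p ∈ P := by
  have h := hP.2 r 0 p hp
  rwa [zero_add, nr_smul_zero, sub_zero] at h

lemma rideal_isRSubmodule {N : Set M} (hN : IsRIdeal R N) : IsRSubmodule R N :=
  ⟨hN.1.1, fun r n hn => rideal_smul_mem hN hn r⟩

lemma isIdeal_univ : IsIdeal (Set.univ : Set R) :=
  ⟨⟨⟨trivial, fun _ _ _ _ => trivial, fun _ _ => trivial⟩, fun _ _ _ => trivial⟩,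
    fun _ _ _ => trivial, fun _ _ _ _ => trivial⟩

lemma isIdeal_left_mul {I : Set R} (hI : IsIdeal I) (r : R) {i : R} (hi : i ∈ I) :
    r * i ∈ I := by
  have h := hI.2.2 r 0 i hi
  rwa [zero_add, NearRing.mul_zero, sub_zero] at h

lemma isLeftRSubgroup_of_isIdeal {I : Set R} (hI : IsIdeal I) : IsLeftRSubgroup I :=
  ⟨hI.1.1, fun r a ha => isIdeal_left_mul hI r ha⟩

lemma isLeftRSubgroup_univ : IsLeftRSubgroup (Set.univ : Set R) :=
  ⟨⟨trivial, fun _ _ _ _ => trivial, fun _ _ => trivial⟩, fun _ _ _ => trivial⟩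

lemma colon_isIdeal {P : Set M} (hP : IsRIdeal R P) (X : Set M)
    (hX : ∀ r : R, ∀ x ∈ X, r • x ∈ X) : IsIdeal (colonSet R P X) := by
  obtain ⟨⟨⟨hP0, hPadd, hPneg⟩, hPnorm⟩, hPid⟩ := hP
  refine ⟨⟨⟨?_, ?_, ?_⟩, ?_⟩, ?_, ?_⟩
  · intro x hx
    rw [nr_zero_smul]; exact hP0
  · intro c hc d hd x hx
    rw [nr_add_smul]; exact hPadd _ (hc x hx) _ (hd x hx)
  · intro c hc x hx
    rw [nr_neg_smul]; exact hPneg _ (hc x hx)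
  · intro g c hc x hx
    rw [nr_add_smul, nr_add_smul, nr_neg_smul]
    exact hPnorm _ _ (hc x hx)
  · intro c hc r x hx
    rw [nr_mul_smul]; exact hc _ (hX r x hx)
  · intro r₁ r₂ c hc x hx
    have h := hPid r₁ (r₂ • x) (c • x) (hc x hx)
    have e : (r₁ * (r₂ + c) - r₁ * r₂) • x = r₁ • (r₂ • x + c • x) - r₁ • (r₂ • x) := by
      simp only [sub_eq_add_neg, nr_add_smul, nr_neg_smul, nr_mul_smul]
    rw [e]; exact h

lemma orbit_isRSubmodule (x : M) :
    IsRSubmodule R {m : M | ∃ r : R, m = r • x} := by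
  refine ⟨⟨⟨0, (nr_zero_smul x).symm⟩, ?_, ?_⟩, ?_⟩
  · rintro _ ⟨r, rfl⟩ _ ⟨s, rfl⟩
    exact ⟨r + s, (nr_add_smul r s x).symm⟩
  · rintro _ ⟨r, rfl⟩
    exact ⟨-r, (nr_neg_smul r x).symm⟩
  · rintro r _ ⟨s, rfl⟩
    exact ⟨r * s, (nr_mul_smul r s x).symm⟩

/-- The common core of the `0`- and `2`-classical prime arguments. -/
lemma core_classical {P N : Set M} (hP : IsRIdeal R P) (hN : IsRIdeal R N)
    (hRM : ¬ (Set.univ : Set R) • (Set.univ : Set M) ⊆ P)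
    (A B I : Set R)
    (hB0 : (0 : R) ∈ B) (hBadd : ∀ x ∈ B, ∀ y ∈ B, x + y ∈ B)
    (hBneg : ∀ x ∈ B, -x ∈ B)
    (hBl : ∀ r : R, ∀ b ∈ B, r * b ∈ B)
    (hIl : ∀ r : R, ∀ i ∈ I, r * i ∈ I)
    (primeA : ∀ X : Set M, IsRSubmodule R X → A • X ⊆ P →
        A • (Set.univ : Set M) ⊆ P ∨ X ⊆ P)
    (primeI : ∀ (C : Set R) (X : Set M), IsIdeal C → IsRSubmodule R X → C • X ⊆ P →
        C • (Set.univ : Set M) ⊆ P ∨ X ⊆ P)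
    (hABI : A * B * I ⊆ colonSet R P N) :
    A * I ⊆ colonSet R P N ∨ B * I ⊆ colonSet R P N := by
  by_cases hAI : A * I ⊆ colonSet R P N
  · exact Or.inl hAI
  right
  obtain ⟨q, hqAI, hqQ⟩ := Set.not_subset.mp hAI
  obtain ⟨a₁, ha₁, i₁, hi₁, rfl⟩ := hqAI
  obtain ⟨n₁, hn₁, hw⟩ : ∃ n ∈ N, (a₁ * i₁) • n ∉ P := by
    by_contra hcon
    push_neg at hcon
    exact hqQ (fun n hn => hcon n hn)
  have hAM : ¬ A • (Set.univ : Set M) ⊆ P := by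
    intro h
    refine hw ?_
    rw [nr_mul_smul]
    exact h (Set.smul_mem_smul ha₁ (Set.mem_univ _))
  -- Step I
  have F1 : ∀ (r b i : R), b ∈ B → i ∈ I → ∀ n ∈ N, (r * (b * i)) • n ∈ P := by
    intro r₀ b i hb hi n hn
    have hsub := orbit_isRSubmodule (R := R) ((b * i) • n)
    have hkill : A • {m : M | ∃ r : R, m = r • ((b * i) • n)} ⊆ P := by
      rintro _ ⟨a, ha, _, ⟨s, rfl⟩, rfl⟩
      show a • s • (b * i) • n ∈ P
      have hmem : (a * (s * b)) * i ∈ A * B * I :=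
        Set.mul_mem_mul (Set.mul_mem_mul ha (hBl s b hb)) hi
      have hQ := hABI hmem n hn
      have e : a • s • (b * i) • n = ((a * (s * b)) * i) • n := by
        simp only [nr_mul_smul, mul_assoc]
      rw [e]; exact hQ
    rcases primeA _ hsub hkill with h | h
    · exact absurd h hAM
    · exact h ⟨r₀, (nr_mul_smul r₀ (b * i) n)⟩
  intro q hq
  obtain ⟨b, hb, i, hi, rfl⟩ := hq
  intro n hn
  show (b * i) • n ∈ P
  have hYsub : IsRSubmodule R {m : M | ∃ r : R, m = r • (i • n)} :=
    orbit_isRSubmodule (i • n)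
  have hK : IsIdeal (colonSet R P {m : M | ∃ r : R, m = r • (i • n)}) :=
    colon_isIdeal hP _ hYsub.2
  have hKY : colonSet R P {m : M | ∃ r : R, m = r • (i • n)} •
      {m : M | ∃ r : R, m = r • (i • n)} ⊆ P := by
    rintro _ ⟨c, hc, y, hy, rfl⟩
    exact hc y hy
  rcases primeI _ _ hK hYsub hKY with hKM | hYP
  · -- F2 : R * B kills everything
    have F2 : ∀ (r c : R), c ∈ B → ∀ m : M, (r * c) • m ∈ P := by
      intro r c hc m
      have hrcK : r * c ∈ colonSet R P {m : M | ∃ r : R, m = r • (i • n)} := by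
        rintro _ ⟨s, rfl⟩
        have e : (r * c) • s • (i • n) = (r * (c * (s * i))) • n := by
          simp only [nr_mul_smul]
        rw [e]
        exact F1 r c (s * i) hc (hIl s i hi) n hn
      exact hKM (Set.smul_mem_smul hrcK (Set.mem_univ m))
    have hP0 : (0 : M) ∈ P := hP.1.1.1
    have hPadd := hP.1.1.2.1
    have hPneg := hP.1.1.2.2
    have hPnorm := hP.1.2
    have hVkill : ∀ r : R, ∀ v ∈ {m : M | ∃ c ∈ B, ∃ p ∈ P, m = c • (i • n) + p},
        r • v ∈ P := by
      rintro r _ ⟨c, hc, p, hp, rfl⟩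
      have h1 : r • (c • (i • n) + p) - r • (c • (i • n)) ∈ P := hP.2 r (c • (i • n)) p hp
      have h2 : r • (c • (i • n)) ∈ P := by
        rw [← nr_mul_smul]
        exact F2 r c hc (i • n)
      have e2 : r • (c • (i • n) + p)
          = (r • (c • (i • n) + p) - r • (c • (i • n))) + r • (c • (i • n)) := by
        rw [sub_add_cancel]
      rw [e2]; exact hPadd _ h1 _ h2
    have hPV : ∀ p ∈ P, p ∈ {m : M | ∃ c ∈ B, ∃ p ∈ P, m = c • (i • n) + p} :=
      fun p hp => ⟨0, hB0, p, hp, by rw [nr_zero_smul, zero_add]⟩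
    have hVsub : IsRSubmodule R {m : M | ∃ c ∈ B, ∃ p ∈ P, m = c • (i • n) + p} := by
      refine ⟨⟨⟨0, hB0, 0, hP0, by rw [nr_zero_smul, zero_add]⟩, ?_, ?_⟩, ?_⟩
      · rintro _ ⟨c₁, hc₁, p₁, hp₁, rfl⟩ _ ⟨c₂, hc₂, p₂, hp₂, rfl⟩
        refine ⟨c₁ + c₂, hBadd _ hc₁ _ hc₂, (-(c₂ • (i • n)) + p₁ + c₂ • (i • n)) + p₂,
          ?_, ?_⟩
        · refine hPadd _ ?_ _ hp₂
          have h := hPnorm (-(c₂ • (i • n))) p₁ hp₁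
          rwa [neg_neg] at h
        · rw [nr_add_smul]
          simp only [add_assoc, add_neg_cancel_left]
      · rintro _ ⟨c, hc, p, hp, rfl⟩
        refine ⟨-c, hBneg _ hc, c • (i • n) + -p + -(c • (i • n)), ?_, ?_⟩
        · exact hPnorm (c • (i • n)) (-p) (hPneg _ hp)
        · rw [nr_neg_smul, neg_add_rev]
          simp only [add_assoc, neg_add_cancel_left]
      · intro r v hv
        exact hPV _ (hVkill r v hv)
    have hUV : (Set.univ : Set R) • {m : M | ∃ c ∈ B, ∃ p ∈ P, m = c • (i • n) + p}
        ⊆ P := by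
      rintro _ ⟨r, -, v, hv, rfl⟩
      exact hVkill r v hv
    rcases primeI _ _ isIdeal_univ hVsub hUV with h | hVP
    · exact absurd h hRM
    · have hbV : b • (i • n) ∈ {m : M | ∃ c ∈ B, ∃ p ∈ P, m = c • (i • n) + p} :=
        ⟨b, hb, 0, hP0, by rw [add_zero]⟩
      rw [nr_mul_smul]
      exact hVP hbV
  · exact hYP ⟨b, (nr_mul_smul b i n)⟩

end NearRingLemmas


/-- Statement 15: if `P` is a `v`-prime `R`-ideal of `M` (with `RM ⊄ P`), then for
every `R`-ideal `N` of `M` with `N ⊄ P`, `(P : N)` is a `v`-classical prime ideal of `R`. -/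


theorem stmt_15 {R M : Type*} [NearRing R] [AddGroup M] [NearRingModule R M]
    (P : Set M) (hP : IsRIdeal R P)
    (hRM : ¬ (Set.univ : Set R) • (Set.univ : Set M) ⊆ P) :
    (Prime0 R P →
      ∀ N : Set M, IsRIdeal R N → ¬ N ⊆ P → Classical0PrimeIdealR (colonSet R P N)) ∧
    (Prime2 R P →
      ∀ N : Set M, IsRIdeal R N → ¬ N ⊆ P → Classical2PrimeIdealR (colonSet R P N)) ∧
    (Prime3 R P →
      ∀ N : Set M, IsRIdeal R N → ¬ N ⊆ P → Classical3PrimeIdealR (colonSet R P N)) ∧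
    (PrimeC R P →
      ∀ N : Set M, IsRIdeal R N → ¬ N ⊆ P → ClassicalCPrimeIdealR (colonSet R P N)) := by
  constructor
  · -- v = 0
    intro h0 N hNid hNP
    have hNsub := rideal_isRSubmodule hNid
    refine ⟨colon_isIdeal hP N hNsub.2, ?_, ?_⟩
    · intro hQu
      obtain ⟨n₀, hn₀, hn₀P⟩ := Set.not_subset.mp hNP
      have hUN : (Set.univ : Set R) • N ⊆ P := by
        rintro _ ⟨r, -, n, hn, rfl⟩
        have hr : r ∈ colonSet R P N := by rw [hQu]; trivial
        exact hr n hn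
      rcases h0 Set.univ N isIdeal_univ hNsub hUN with h | h
      · exact hRM h
      · exact hn₀P (h hn₀)
    · intro A B I hA hB hI hABI
      exact core_classical hP hNid hRM A B I hB.1.1.1 hB.1.1.2.1 hB.1.1.2.2
        (fun r b hb => isIdeal_left_mul hB r hb)
        (fun r i hi => isIdeal_left_mul hI r hi)
        (fun X hX hAX => h0 A X hA hX hAX)
        (fun C X hC hX hCX => h0 C X hC hX hCX) hABI
  constructor
  · -- v = 2
    intro h2 N hNid hNP
    have hNsub := rideal_isRSubmodule hNid
    refine ⟨colon_isIdeal hP N hNsub.2, ?_, ?_⟩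
    · intro hQu
      obtain ⟨n₀, hn₀, hn₀P⟩ := Set.not_subset.mp hNP
      have hUN : (Set.univ : Set R) • N ⊆ P := by
        rintro _ ⟨r, -, n, hn, rfl⟩
        have hr : r ∈ colonSet R P N := by rw [hQu]; trivial
        exact hr n hn
      rcases h2 Set.univ N isLeftRSubgroup_univ hNsub hUN with h | h
      · exact hRM h
      · exact hn₀P (h hn₀)
    · intro A B I hA hB hI hABI
      exact core_classical hP hNid hRM A B I hB.1.1 hB.1.2.1 hB.1.2.2
        (fun r b hb => hB.2 r b hb)
        (fun r i hi => isIdeal_left_mul hI r hi)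
        (fun X hX hAX => h2 A X hA hX hAX)
        (fun C X hC hX hCX => h2 C X (isLeftRSubgroup_of_isIdeal hC) hX hCX) hABI
  constructor
  · -- v = 3
    intro h3 N hNid hNP
    have hNsub := rideal_isRSubmodule hNid
    refine ⟨colon_isIdeal hP N hNsub.2, ?_, ?_⟩
    · intro hQu
      obtain ⟨n₀, hn₀, hn₀P⟩ := Set.not_subset.mp hNP
      have hall : ∀ r : R, r • (Set.univ : Set M) ⊆ P := by
        intro r
        have hyp : ((({r} : Set R) * Set.univ)) • ({n₀} : Set M) ⊆ P := by
          rintro _ ⟨u, hu, y, hy, rfl⟩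
          obtain ⟨r', hr', s, -, rfl⟩ := hu
          rw [Set.mem_singleton_iff] at hr' hy
          have hs : s • n₀ ∈ N := hNsub.2 s n₀ hn₀
          have hrc : r ∈ colonSet R P N := by rw [hQu]; trivial
          have e : (r' * s) • y = r • (s • n₀) := by rw [hr', hy, nr_mul_smul]
          show (r' * s) • y ∈ P
          rw [e]
          exact hrc _ hs
        rcases h3 r n₀ hyp with h | h
        · exact h
        · exact absurd h hn₀P
      refine hRM ?_
      rintro _ ⟨r, -, m, -, rfl⟩
      exact hall r (Set.smul_mem_smul_set (Set.mem_univ m))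
    · intro a b I hI habI
      by_cases haI : ({a} : Set R) * I ⊆ colonSet R P N
      · exact Or.inl haI
      right
      obtain ⟨q, hqm, hqQ⟩ := Set.not_subset.mp haI
      obtain ⟨a', ha', i₁, hi₁, rfl⟩ := hqm
      rw [Set.mem_singleton_iff] at ha'; subst ha'
      obtain ⟨n₁, hn₁, hw⟩ : ∃ n ∈ N, (a' * i₁) • n ∉ P := by
        by_contra hcon
        push_neg at hcon
        exact hqQ (fun n hn => hcon n hn)
      have hAM : ¬ a' • (Set.univ : Set M) ⊆ P := by
        intro h
        refine hw ?_
        rw [nr_mul_smul]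
        exact h (Set.smul_mem_smul_set (Set.mem_univ _))
      intro q hq
      obtain ⟨b', hb', i, hi, rfl⟩ := hq
      rw [Set.mem_singleton_iff] at hb'; subst hb'
      intro n hn
      show (b' * i) • n ∈ P
      have hms : ∀ s : R, (b' * s) • (i • n) ∈ P := by
        intro s
        have hyp : ((({a'} : Set R) * Set.univ)) • ({(b' * s) • (i • n)} : Set M) ⊆ P := by
          rintro _ ⟨u, hu, y, hy, rfl⟩
          obtain ⟨a'', ha'', r, -, rfl⟩ := hu
          rw [Set.mem_singleton_iff] at ha'' hy
          subst ha''; subst hy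
          show (a'' * r) • (b' * s) • (i • n) ∈ P
          have hmem : (((a'' * r) * (b' * s)) * i)
              ∈ (({a''} : Set R) * Set.univ) * (({b'} : Set R) * Set.univ) * I :=
            Set.mul_mem_mul (Set.mul_mem_mul (Set.mul_mem_mul rfl (Set.mem_univ r))
              (Set.mul_mem_mul rfl (Set.mem_univ s))) hi
          have hQ := habI hmem n hn
          have e : (a'' * r) • (b' * s) • (i • n) = (((a'' * r) * (b' * s)) * i) • n := by
            simp only [nr_mul_smul]
          rw [e]; exact hQ
        rcases h3 a' ((b' * s) • (i • n)) hyp with h | h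
        · exact absurd h hAM
        · exact h
      have hyp2 : ((({b'} : Set R) * Set.univ)) • ({i • n} : Set M) ⊆ P := by
        rintro _ ⟨u, hu, y, hy, rfl⟩
        obtain ⟨b'', hb'', s, -, rfl⟩ := hu
        rw [Set.mem_singleton_iff] at hb'' hy
        subst hb''; subst hy
        exact hms s
      rcases h3 b' (i • n) hyp2 with h | h
      · rw [nr_mul_smul]
        exact h (Set.smul_mem_smul_set (Set.mem_univ _))
      · rw [nr_mul_smul]
        exact rideal_smul_mem hP h b'
  · -- v = c
    intro hc N hNid hNP
    have hNsub := rideal_isRSubmodule hNid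
    refine ⟨colon_isIdeal hP N hNsub.2, ?_, ?_⟩
    · intro hQu
      obtain ⟨n₀, hn₀, hn₀P⟩ := Set.not_subset.mp hNP
      have hall : ∀ r : R, r • (Set.univ : Set M) ⊆ P := by
        intro r
        have hyp : r • n₀ ∈ P := by
          have hrc : r ∈ colonSet R P N := by rw [hQu]; trivial
          exact hrc n₀ hn₀
        rcases hc r n₀ hyp with h | h
        · exact h
        · exact absurd h hn₀P
      refine hRM ?_
      rintro _ ⟨r, -, m, -, rfl⟩
      exact hall r (Set.smul_mem_smul_set (Set.mem_univ m))
    · intro a b I hI habI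
      by_cases hbI : ({b} : Set R) * I ⊆ colonSet R P N
      · exact Or.inr hbI
      left
      obtain ⟨q, hqm, hqQ⟩ := Set.not_subset.mp hbI
      obtain ⟨b', hb', i₀, hi₀, rfl⟩ := hqm
      rw [Set.mem_singleton_iff] at hb'; subst hb'
      obtain ⟨n₀, hn₀, hw⟩ : ∃ n ∈ N, (b' * i₀) • n ∉ P := by
        by_contra hcon
        push_neg at hcon
        exact hqQ (fun n hn => hcon n hn)
      have hbx : b' • (i₀ • n₀) ∉ P := by
        rw [← nr_mul_smul]; exact hw
      have haM : a • (Set.univ : Set M) ⊆ P := by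
        by_contra haM
        have h5 : ∀ r : R, r • (b' • (i₀ • n₀)) ∈ P := by
          intro r
          have hyp : a • (r • (b' • (i₀ • n₀))) ∈ P := by
            have hmem : ((a * r) * b') * i₀ ∈ ({a} : Set R) * Set.univ * {b'} * I :=
              Set.mul_mem_mul (Set.mul_mem_mul
                (Set.mul_mem_mul rfl (Set.mem_univ r)) rfl) hi₀
            have hQ := habI hmem n₀ hn₀
            have e : a • (r • (b' • (i₀ • n₀))) = (((a * r) * b') * i₀) • n₀ := by
              simp only [nr_mul_smul]
            rw [e]; exact hQ
          rcases hc a (r • (b' • (i₀ • n₀))) hyp with h | h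
          · exact absurd h haM
          · exact h
        have h6 : ∀ r : R, r • (Set.univ : Set M) ⊆ P := by
          intro r
          rcases hc r (b' • (i₀ • n₀)) (h5 r) with h | h
          · exact h
          · exact absurd h hbx
        refine hRM ?_
        rintro _ ⟨r, -, m, -, rfl⟩
        exact h6 r (Set.smul_mem_smul_set (Set.mem_univ m))
      intro q hq
      obtain ⟨a', ha', i, hi, rfl⟩ := hq
      rw [Set.mem_singleton_iff] at ha'; subst ha'
      intro n hn
      rw [nr_mul_smul]
      exact haM (Set.smul_mem_smul_set (Set.mem_univ _))
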